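/- Let $\Delta t > 0$, $\lambda, \sigma \in \mathbb{R}$, and $V^n, X^n, \bar X, \theta \in \mathbb{R}^d$. For $m \in (0,1)$ set $\gamma = 1 - m$ and $V^{n+1}(m) = \frac{m}{m + \gamma \Delta t} V^n + \frac{\lambda \Delta t}{m + \gamma \Delta t}(\bar X - X^n) + \frac{\sigma \sqrt{\Delta t}}{m + \gamma \Delta t} D(\bar X - X^n)\theta$. Then as $m \to 0^+$, $V^{n+1}(m)$ converges to $\lambda(\bar X - X^n) + \frac{\sigma}{\sqrt{\Delta t}} D(\bar X - X^n)\theta$, and consequently $X^n + \Delta t\, V^{n+1}(m)$ converges to $X^n + \Delta t\, \lambda (\bar X - X^n) + \sqrt{\Delta t}\, \sigma D(\bar X - X^n)\theta$, which is one Euler–Maruyama step for the consensus-based optimization dynamics. -/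

import Mathlib

open Filter Topology

/-! As the inertia `m` vanishes, the implicit denominator `m + (1 - m) Δt` tends to `Δt ≠ 0`, so
every coefficient of the velocity update is continuous at `m = 0`: the inertia term `m / (…) • V`
disappears and the remaining coefficients become `λ` and `σ / √Δt`. One position step
`X + Δt V` then gives `Δt λ` and `Δt σ / √Δt = √Δt σ`. -/

lemma tendsto_velocity_update {E : Type*} [AddCommGroup E] [Module ℝ E] [TopologicalSpace E]
    [ContinuousAdd E] [ContinuousSMul ℝ E] {Δt : ℝ} (hΔt : Δt ≠ 0) (a b : ℝ) (V A B : E) :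
    Tendsto
      (fun m : ℝ => (m / (m + (1 - m) * Δt)) • V + (a / (m + (1 - m) * Δt)) • A
        + (b / (m + (1 - m) * Δt)) • B)
      (𝓝 0) (𝓝 ((a / Δt) • A + (b / Δt) • B)) := by
  convert (ContinuousAt.tendsto ?_) using 2
  · simp
  · fun_prop (disch := simpa using hΔt)

theorem small_inertia_limit_of_scheme (d : ℕ) (Δt lam σ : ℝ) (hΔt : 0 < Δt)
    (V X Xbar θ : Fin d → ℝ) :
    (Tendsto
      (fun m : ℝ =>
        (m / (m + (1 - m) * Δt)) • V
          + (lam * Δt / (m + (1 - m) * Δt)) • (Xbar - X)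
          + (σ * Real.sqrt Δt / (m + (1 - m) * Δt)) •
              (Matrix.diagonal (Xbar - X)).mulVec θ)
      (nhdsWithin 0 (Set.Ioo (0:ℝ) 1))
      (nhds (lam • (Xbar - X)
        + (σ / Real.sqrt Δt) • (Matrix.diagonal (Xbar - X)).mulVec θ)))
    ∧ (Tendsto
      (fun m : ℝ =>
        X + Δt • ((m / (m + (1 - m) * Δt)) • V
          + (lam * Δt / (m + (1 - m) * Δt)) • (Xbar - X)
          + (σ * Real.sqrt Δt / (m + (1 - m) * Δt)) •
              (Matrix.diagonal (Xbar - X)).mulVec θ))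
      (nhdsWithin 0 (Set.Ioo (0:ℝ) 1))
      (nhds (X + (Δt * lam) • (Xbar - X)
        + (Real.sqrt Δt * σ) • (Matrix.diagonal (Xbar - X)).mulVec θ))) := by
  have hvelocity := (tendsto_velocity_update hΔt.ne' (lam * Δt) (σ * Real.sqrt Δt) V (Xbar - X)
    ((Matrix.diagonal (Xbar - X)).mulVec θ)).mono_left
    (nhdsWithin_le_nhds (s := Set.Ioo 0 1))
  rw [mul_div_cancel_right₀ _ hΔt.ne', mul_div_assoc, Real.sqrt_div_self',
    ← div_eq_mul_one_div] at hvelocity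
  refine ⟨hvelocity, ?_⟩
  have hstep : Δt * (σ / Real.sqrt Δt) = Real.sqrt Δt * σ := by
    rw [mul_div_left_comm, Real.div_sqrt, mul_comm]
  simpa only [smul_add, smul_smul, hstep, add_assoc] using (hvelocity.const_smul Δt).const_add X
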